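/- Let (R, m, k) be a commutative Noetherian local ring and let x ∈ m \ m² be a nonzerodivisor on R. Then the natural short exact sequence of R/(x)-modules 0 → k → m/xm → m/xR → 0, in which the first map sends 1 to the class of x and the second map is the natural surjection, is split; in particular m/xm ≅ k ⊕ m/xR as R/(x)-modules. -/

import Mathlib

open CategoryTheory IsLocalRing TensorProduct

universe u

noncomputable section

/-- `extMod R i M N` is the Ext module `Ext_R^i(M, N)`. -/
abbrev extMod (R : Type u) [CommRing R] (i : ℕ) (M N : ModuleCat.{u} R) :
    ModuleCat.{u} R :=
  ((Ext R (ModuleCat.{u} R) i).obj (Opposite.op M)).obj N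

/-- A finitely generated `R`-module `C` is *semidualizing* if the natural homomorphism
`R → Hom_R(C, C)` (sending `r` to multiplication by `r`) is bijective
and `Ext_R^i(C, C) = 0` for all `i > 0`. -/
def IsSemidualizing (R : Type u) [CommRing R] (C : ModuleCat.{u} R) : Prop :=
  Module.Finite R C ∧ Function.Bijective (LinearMap.lsmul R C) ∧
    ∀ i : ℕ, 0 < i → Subsingleton (extMod R i C C)

/-- A finitely generated `R`-module `X` is *G-projective* if the biduality map
`X → Hom_R(Hom_R(X,R),R)` is bijective and `Ext_R^i(X, R) = 0 = Ext_R^i(X^*, R)`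
for all `i > 0`. -/
def IsGProjective (R : Type u) [CommRing R] (X : ModuleCat.{u} R) : Prop :=
  Module.Finite R X ∧ Function.Bijective (Module.Dual.eval R X) ∧
    (∀ i : ℕ, 0 < i → Subsingleton (extMod R i X (ModuleCat.of R R))) ∧
    (∀ i : ℕ, 0 < i →
      Subsingleton (extMod R i (ModuleCat.of R (Module.Dual R X)) (ModuleCat.of R R)))

/-- `IsMinimalSyzygy R N M` : there is a short exact sequence `0 → N → F → M → 0`
with `F` finite free and the image of `N` contained in `m·F`. -/
def IsMinimalSyzygy (R : Type u) [CommRing R] [IsLocalRing R]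
    (N M : ModuleCat.{u} R) : Prop :=
  ∃ (F : ModuleCat.{u} R) (g : N ⟶ F) (f : F ⟶ M),
    Module.Free R F ∧ Module.Finite R F ∧
    Function.Injective g ∧ Function.Surjective f ∧
    LinearMap.range g.hom = LinearMap.ker f.hom ∧
    LinearMap.range g.hom ≤ (maximalIdeal R) • (⊤ : Submodule R F)

/-- `IsSyzygy R n M S` means that `S` is an `n`-th syzygy module `Ω^n_R M` of `M`,
i.e. there are modules `M = N₀, N₁, …, Nₙ ≅ S` with each `N_{i+1}` a minimal first
syzygy of `N_i`. -/
def IsSyzygy (R : Type u) [CommRing R] [IsLocalRing R] :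
    ℕ → ModuleCat.{u} R → ModuleCat.{u} R → Prop
  | 0, M, S => Nonempty (S ≃ₗ[R] M)
  | n + 1, M, S => ∃ N : ModuleCat.{u} R, IsMinimalSyzygy R N M ∧ IsSyzygy R n N S

/-- The depth of a module `N` over a local ring `R`: the least `i` with
`Ext_R^i(k, N) ≠ 0`. -/
def moduleDepth (R : Type u) [CommRing R] [IsLocalRing R] (N : ModuleCat.{u} R) : ℕ :=
  sInf {i : ℕ | ¬ Subsingleton (extMod R i (ModuleCat.of R (ResidueField R)) N)}

/-- `depth R`, the least `i` with `Ext_R^i(k, R) ≠ 0`. -/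
abbrev ringDepth (R : Type u) [CommRing R] [IsLocalRing R] : ℕ :=
  moduleDepth R (ModuleCat.of R R)

/-- The grade of a module `N`: the least `i` with `Ext_R^i(N, R) ≠ 0`,
with grade `∞` when no such `i` exists (e.g. for the zero module). -/
def moduleGrade (R : Type u) [CommRing R] (N : ModuleCat.{u} R) : ℕ∞ :=
  sInf ((↑) '' {i : ℕ | ¬ Subsingleton (extMod R i N (ModuleCat.of R R))})

/-- A Noetherian local ring is *regular* if its maximal ideal can be generated by
`dim R` elements, i.e. the Krull dimension equals the embedding dimension
`dim_k m/m²`. -/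
def IsRegularLocalRing' (R : Type u) [CommRing R] [IsLocalRing R] : Prop :=
  IsNoetherianRing R ∧
    ringKrullDim R = (Module.finrank (ResidueField R) (CotangentSpace R) : WithBot ℕ∞)

/-- A Noetherian local ring is *Gorenstein* if it has finite injective dimension as a
module over itself; equivalently, there is an `n` such that `Ext_R^i(M, R) = 0`
for all modules `M` and all `i > n`. -/
def IsGorensteinLocalRing (R : Type u) [CommRing R] [IsLocalRing R] : Prop :=
  ∃ n : ℕ, ∀ i : ℕ, n < i → ∀ M : ModuleCat.{u} R,
    Subsingleton (extMod R i M (ModuleCat.of R R))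

/-- A module is *indecomposable* if it is nonzero and in any direct sum decomposition
one of the two summands vanishes. -/
def IsIndecomposableModule (R : Type u) [CommRing R] (M : ModuleCat.{u} R) : Prop :=
  Nontrivial M ∧ ∀ (X Y : ModuleCat.{u} R),
    Nonempty (M ≃ₗ[R] ↥X × ↥Y) → Subsingleton X ∨ Subsingleton Y

open Pointwise

/-- For a nonzerodivisor `x ∈ m \ m²` on a commutative Noetherian local
ring `R`, the natural short exact sequence `0 → k → m/xm → m/xR → 0` (where the first map
sends `1` to the class of `x` and the second is the natural surjection) is split;
in particular `m/xm ≅ k ⊕ m/xR`. -/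
theorem maximalIdeal_mod_x_sequence_splits
    (R : Type u) [CommRing R] [IsLocalRing R] [IsNoetherianRing R]
    (x : R) (hx : x ∈ maximalIdeal R) (hx2 : x ∉ maximalIdeal R ^ 2)
    (hreg : x ∈ nonZeroDivisors R) :
    ∃ (ι : ResidueField R →ₗ[R]
        (↥(maximalIdeal R) ⧸ (Ideal.span {x} • (⊤ : Submodule R ↥(maximalIdeal R)))))
      (π : (↥(maximalIdeal R) ⧸ (Ideal.span {x} • (⊤ : Submodule R ↥(maximalIdeal R))))
        →ₗ[R] (↥(maximalIdeal R) ⧸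
          Submodule.comap (maximalIdeal R).subtype (Ideal.span {x}))),
      -- `ι` sends the class of `r` to the class of `r • x`
      (∀ r : R, ι (residue R r) =
        Submodule.Quotient.mk (r • (⟨x, hx⟩ : ↥(maximalIdeal R)))) ∧
      -- `π` is the natural surjection
      (∀ a : ↥(maximalIdeal R), π (Submodule.Quotient.mk a) = Submodule.Quotient.mk a) ∧
      -- the sequence `0 → k →ι m/xm →π m/xR → 0` is exact
      Function.Injective ι ∧ Function.Exact ι π ∧ Function.Surjective π ∧
      -- and it is split
      (∃ ρ, ρ ∘ₗ ι = LinearMap.id) ∧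
      Nonempty ((↥(maximalIdeal R) ⧸
          (Ideal.span {x} • (⊤ : Submodule R ↥(maximalIdeal R)))) ≃ₗ[R]
        ResidueField R × (↥(maximalIdeal R) ⧸
          Submodule.comap (maximalIdeal R).subtype (Ideal.span {x}))) := by
  classical
  have hxm_eq : (Ideal.span {x} • (⊤ : Submodule R ↥(maximalIdeal R)))
      = x • (⊤ : Submodule R ↥(maximalIdeal R)) :=
    Submodule.ideal_span_singleton_smul x ⊤
  have mem_xm : ∀ z : ↥(maximalIdeal R),
      z ∈ (Ideal.span {x} • (⊤ : Submodule R ↥(maximalIdeal R))) ↔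
      ∃ b : ↥(maximalIdeal R), x * (b : R) = (z : R) := by
    intro z
    rw [hxm_eq]
    constructor
    · intro hz
      obtain ⟨b, -, hb⟩ := Submodule.mem_map.1 hz
      exact ⟨b, congrArg Subtype.val hb⟩
    · rintro ⟨b, hb⟩
      exact Submodule.mem_map.2 ⟨b, trivial, Subtype.ext hb⟩
  set xhat : ↥(maximalIdeal R) := ⟨x, hx⟩ with hxhat
  -- the injection ι
  have hmem : ∀ r ∈ maximalIdeal R,
      r • xhat ∈ (Ideal.span {x} • (⊤ : Submodule R ↥(maximalIdeal R))) := by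
    intro r hr
    rw [mem_xm]
    exact ⟨⟨r, hr⟩, by simp [hxhat, mul_comm]⟩
  set ι0 : R →ₗ[R] (↥(maximalIdeal R) ⧸ (Ideal.span {x} • (⊤ : Submodule R ↥(maximalIdeal R)))) :=
    (Ideal.span {x} • (⊤ : Submodule R ↥(maximalIdeal R))).mkQ ∘ₗ
      LinearMap.toSpanSingleton R _ xhat with hι0
  have hker : (maximalIdeal R : Submodule R R) ≤ LinearMap.ker ι0 := by
    intro r hr
    simp only [hι0, LinearMap.mem_ker, LinearMap.comp_apply,
      LinearMap.toSpanSingleton_apply, Submodule.mkQ_apply]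
    exact (Submodule.Quotient.mk_eq_zero _).2 (hmem r hr)
  set ι : ResidueField R →ₗ[R]
      (↥(maximalIdeal R) ⧸ (Ideal.span {x} • (⊤ : Submodule R ↥(maximalIdeal R)))) :=
    Submodule.liftQ _ ι0 hker with hιdef
  have hι : ∀ r : R, ι (residue R r) =
      Submodule.Quotient.mk (r • (⟨x, hx⟩ : ↥(maximalIdeal R))) := by
    intro r
    rfl
  -- the surjection π
  have hle : (Ideal.span {x} • (⊤ : Submodule R ↥(maximalIdeal R))) ≤
      Submodule.comap (maximalIdeal R).subtype (Ideal.span {x}) := by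
    intro z hz
    obtain ⟨b, hb⟩ := (mem_xm z).1 hz
    show (z : R) ∈ Ideal.span {x}
    rw [← hb]
    exact Ideal.mul_mem_right _ _ (Ideal.mem_span_singleton_self x)
  set π : (↥(maximalIdeal R) ⧸ (Ideal.span {x} • (⊤ : Submodule R ↥(maximalIdeal R))))
      →ₗ[R] (↥(maximalIdeal R) ⧸
        Submodule.comap (maximalIdeal R).subtype (Ideal.span {x})) :=
    Submodule.liftQ _ (Submodule.comap (maximalIdeal R).subtype (Ideal.span {x})).mkQ
      (by rw [Submodule.ker_mkQ]; exact hle) with hπdef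
  have hπ : ∀ a : ↥(maximalIdeal R),
      π (Submodule.Quotient.mk a) = Submodule.Quotient.mk a := by
    intro a
    rw [hπdef, Submodule.liftQ_apply, Submodule.mkQ_apply]
  -- injectivity of ι
  have hinj : Function.Injective ι := by
    rw [← LinearMap.ker_eq_bot, Submodule.eq_bot_iff]
    intro s hs
    obtain ⟨r, rfl⟩ := Submodule.Quotient.mk_surjective _ s
    have h1 : ι (Submodule.Quotient.mk r) =
        Submodule.Quotient.mk (r • (⟨x, hx⟩ : ↥(maximalIdeal R))) := hι r
    replace hs : ι (residue R r) = 0 := hs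
    rw [hι, Submodule.Quotient.mk_eq_zero] at hs
    obtain ⟨b, hb⟩ := (mem_xm _).1 hs
    have hb' : x * (b : R) = r * x := hb
    have hz : ((b : R) - r) * x = 0 := by
      rw [sub_mul, mul_comm (b : R) x, hb']
      ring
    have : (b : R) - r = 0 := hreg.2 _ hz
    have hr : r ∈ maximalIdeal R := by
      have h' : r = (b : R) := (sub_eq_zero.1 this).symm
      rw [h']; exact b.2
    exact (Submodule.Quotient.mk_eq_zero _).2 hr
  -- exactness
  have hexact : Function.Exact ι π := by
    intro a
    obtain ⟨a0, rfl⟩ := Submodule.Quotient.mk_surjective _ a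
    constructor
    · intro h
      rw [hπ, Submodule.Quotient.mk_eq_zero] at h
      have ha : (a0 : R) ∈ Ideal.span {x} := h
      obtain ⟨r, hr⟩ := Ideal.mem_span_singleton'.1 ha
      refine ⟨residue R r, ?_⟩
      rw [hι]
      congr 1
      exact Subtype.ext (by simpa using hr)
    · rintro ⟨s, hs⟩
      rw [← hs]
      obtain ⟨r, rfl⟩ := Ideal.Quotient.mk_surjective s
      have : (Ideal.Quotient.mk (maximalIdeal R)) r = residue R r := rfl
      rw [this, hι, hπ, Submodule.Quotient.mk_eq_zero]
      show r * x ∈ Ideal.span {x}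
      exact Ideal.mul_mem_left _ _ (Ideal.mem_span_singleton_self x)
  -- surjectivity of π
  have hsurj : Function.Surjective π := by
    intro b
    obtain ⟨a, rfl⟩ := Submodule.Quotient.mk_surjective _ b
    exact ⟨Submodule.Quotient.mk a, hπ a⟩
  -- construction of the retraction ρ via the cotangent space
  have hxbar : (maximalIdeal R).toCotangent xhat ≠ 0 := by
    intro h
    exact hx2 ((Ideal.toCotangent_eq_zero _ _).1 h)
  obtain ⟨f0, hf0⟩ : ∃ f : Module.Dual (ResidueField R) (CotangentSpace R),
      f ((maximalIdeal R).toCotangent xhat) ≠ 0 := by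
    by_contra h
    push_neg at h
    exact hxbar ((Module.forall_dual_apply_eq_zero_iff (ResidueField R) _).1 h)
  set f : CotangentSpace R →ₗ[ResidueField R] ResidueField R :=
    (f0 ((maximalIdeal R).toCotangent xhat))⁻¹ • f0 with hfdef
  have hf : f ((maximalIdeal R).toCotangent xhat) = 1 := by
    simp [hfdef, inv_mul_cancel₀ hf0]
  set g : ↥(maximalIdeal R) →ₗ[R] ResidueField R :=
    (f.restrictScalars R) ∘ₗ (maximalIdeal R).toCotangent with hgdef
  have hgker : (Ideal.span {x} • (⊤ : Submodule R ↥(maximalIdeal R))) ≤ LinearMap.ker g := by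
    intro z hz
    obtain ⟨b, hb⟩ := (mem_xm z).1 hz
    have hz' : z = x • b := Subtype.ext (by simpa using hb.symm)
    simp only [hgdef, LinearMap.mem_ker, LinearMap.comp_apply,
      LinearMap.coe_restrictScalars]
    have : (maximalIdeal R).toCotangent z = 0 := by
      rw [Ideal.toCotangent_eq_zero, hz']
      have : ((x • b : ↥(maximalIdeal R)) : R) = x * (b : R) := rfl
      rw [this, pow_two]
      exact Ideal.mul_mem_mul hx b.2
    rw [this, map_zero]
  set ρ : (↥(maximalIdeal R) ⧸ (Ideal.span {x} • (⊤ : Submodule R ↥(maximalIdeal R))))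
      →ₗ[R] ResidueField R := Submodule.liftQ _ g hgker with hρdef
  have hρι : ρ ∘ₗ ι = LinearMap.id := by
    apply LinearMap.ext
    intro s
    obtain ⟨r, rfl⟩ := IsLocalRing.residue_surjective s
    have h0 : (Ideal.Quotient.mk (maximalIdeal R)) r = residue R r := rfl
    rw [LinearMap.comp_apply, hι, hρdef, Submodule.liftQ_apply]
    have h1 : g (r • (⟨x, hx⟩ : ↥(maximalIdeal R))) = r • g ⟨x, hx⟩ := map_smul g r _
    have h2 : g (⟨x, hx⟩ : ↥(maximalIdeal R)) = 1 := by
      rw [hgdef, LinearMap.comp_apply, LinearMap.coe_restrictScalars]; exact hf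
    rw [h1, h2, LinearMap.id_apply]
    show r • (1 : ResidueField R) = residue R r
    rw [Algebra.smul_def, mul_one]
    rfl
  have hρι' : ∀ s, ρ (ι s) = s := fun s => by
    have := congrArg (fun h => h s) hρι
    simpa using this
  have hπι : ∀ s, π (ι s) = 0 := fun s => (hexact (ι s)).2 ⟨s, rfl⟩
  -- the splitting isomorphism
  have hbij : Function.Bijective (LinearMap.prod ρ π) := by
    constructor
    · rw [← LinearMap.ker_eq_bot, Submodule.eq_bot_iff]
      intro a ha
      rw [LinearMap.mem_ker, LinearMap.prod_apply] at ha
      have h1 : ρ a = 0 := congrArg Prod.fst ha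
      have h2 : π a = 0 := congrArg Prod.snd ha
      obtain ⟨s, rfl⟩ := (hexact a).1 h2
      rw [hρι' s] at h1
      rw [h1, map_zero]
    · rintro ⟨s, b⟩
      obtain ⟨a, ha⟩ := hsurj b
      refine ⟨a + ι (s - ρ a), ?_⟩
      have e1 : ρ (a + ι (s - ρ a)) = s := by
        rw [map_add, hρι' (s - ρ a)]; ring
      have e2 : π (a + ι (s - ρ a)) = b := by
        rw [map_add, hπι, add_zero, ha]
      simp only [LinearMap.prod_apply, Function.prod, e1, e2]
  exact ⟨ι, π, hι, hπ, hinj, hexact, hsurj, ⟨ρ, hρι⟩,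
    ⟨LinearEquiv.ofBijective (LinearMap.prod ρ π) hbij⟩⟩

end
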